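/- Let Λ be a free ℤ-module of rank 2 with a symmetric bilinear form of signature (1,1) that is even (all self-intersections even). Then there exists a basis {F1, F2} of Λ such that F1·F1 ≥ 0, F1·F2 ≥ 0, and F2·F2 < 0. -/

import Mathlib

/-!
Pick `v` with `B v v < 0` as close to `0` as possible. Then `v` is primitive (`B (d • w) (d • w) =
d² B w w`), so it is the second vector of a basis `(u, v)`, whose Gram determinant is that of the
given basis. Choose `k` with `|2 (B u v + k B v v)| ≤ |B v v|`. Completing the square,
`B v v * B (u + k • v) (u + k • v) = (B u v + k B v v)² + gramDet B u v < (B v v)²`, so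
`B (u + k • v) (u + k • v) ≤ B v v` is impossible, and by the choice of `v` this value is `≥ 0`.
Replacing `v` by `-v` if necessary makes `B (u + k • v) v ≥ 0`.
-/

open LinearMap (toMatrix₂)

theorem Int.exists_abs_two_mul_add_mul_le (m : ℤ) {c : ℤ} (hc : c ≠ 0) :
    ∃ k : ℤ, |2 * (m + k * c)| ≤ |c| := by
  have hn : 0 < c.natAbs := Int.natAbs_pos.mpr hc
  obtain ⟨k, hk⟩ : c ∣ m.bmod c.natAbs - m := by
    rw [← Int.natAbs_dvd]
    exact Int.ModEq.dvd (Int.bmod_emod (x := m) (m := c.natAbs)).symm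
  refine ⟨k, ?_⟩
  have h1 := Int.le_bmod (x := m) hn
  have h2 := Int.bmod_lt (x := m) hn
  rw [show m + k * c = m.bmod c.natAbs by linarith, abs_le, Int.abs_eq_natAbs]
  omega

theorem Int.exists_max_of_exists_neg {α : Type*} (f : α → ℤ) (h : ∃ a, f a < 0) :
    ∃ a, f a < 0 ∧ ∀ b, f b < 0 → f b ≤ f a := by
  obtain ⟨n, ⟨a, rfl, ha⟩, hmax⟩ := Int.exists_greatest_of_bdd (P := fun n => ∃ a, f a = n ∧ n < 0)
    ⟨0, fun _ ⟨_, _, hn⟩ => hn.le⟩ (h.elim fun a ha => ⟨f a, a, rfl, ha⟩)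
  exact ⟨a, ha, fun b hb => hmax _ ⟨b, rfl, hb⟩⟩

theorem LinearMap.det_toMatrix₂_eq {R M ι : Type*} [CommRing R] [AddCommGroup M] [Module R M]
    [Fintype ι] [DecidableEq ι] (B : M →ₗ[R] M →ₗ[R] R) (b c : Module.Basis ι R M) :
    (toMatrix₂ c c B).det = b.det c ^ 2 * (toMatrix₂ b b B).det := by
  rw [← LinearMap.toMatrix₂_mul_basis_toMatrix b b c c, Matrix.det_mul, Matrix.det_mul,
    Matrix.det_transpose, Module.Basis.det_apply]
  ring

namespace Module.Basis

theorem exists_fin_two_of_isUnit {R M : Type*} [CommRing R] [AddCommGroup M] [Module R M]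
    (g : Basis (Fin 2) R M) {p q r s : R} (h : IsUnit (p * s - q * r)) :
    ∃ g' : Basis (Fin 2) R M, g' 0 = p • g 0 + r • g 1 ∧ g' 1 = q • g 0 + s • g 1 := by
  let A : Matrix (Fin 2) (Fin 2) R := !![p, q; r, s]
  have hA : IsUnit A.det := by simpa [A, Matrix.det_fin_two_of] using h
  refine ⟨g.map (Matrix.toLinearEquiv g A hA), ?_, ?_⟩ <;>
    simp [Matrix.toLinearEquiv_apply, Matrix.toLin_self, Fin.sum_univ_two, A]

theorem exists_snd_eq {M : Type*} [AddCommGroup M] (g : Basis (Fin 2) ℤ M) {v : M}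
    (hv : ∀ (d : ℤ) w, v = d • w → IsUnit d) : ∃ g' : Basis (Fin 2) ℤ M, g' 1 = v := by
  set p := g.repr v 0
  set s := g.repr v 1
  have hvps : v = p • g 0 + s • g 1 := by
    have := g.sum_repr v
    rwa [Fin.sum_univ_two, eq_comm] at this
  have hcop : IsCoprime p s := by
    refine isRelPrime_iff_isCoprime.mp fun d ⟨p₀, hp⟩ ⟨s₀, hs⟩ => hv d (p₀ • g 0 + s₀ • g 1) ?_
    rw [hvps, hp, hs, smul_add, mul_smul, mul_smul]
  obtain ⟨x, y, hxy⟩ := hcop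
  obtain ⟨g', -, hg'⟩ := g.exists_fin_two_of_isUnit (p := -y) (q := p) (r := x) (s := s)
    (by rw [show -y * s - p * x = -1 by linear_combination -hxy]; exact isUnit_one.neg)
  exact ⟨g', hg'.trans hvps.symm⟩

end Module.Basis

section

variable {Λ : Type*} [AddCommGroup Λ] (B : Λ →ₗ[ℤ] Λ →ₗ[ℤ] ℤ)

def gramDet (u v : Λ) : ℤ := B u u * B v v - B u v ^ 2

theorem apply_smul_add_smul_self (hsymm : ∀ x y, B x y = B y x) (u v : Λ) (x y : ℤ) :
    B (x • u + y • v) (x • u + y • v) = x ^ 2 * B u u + 2 * x * y * B u v + y ^ 2 * B v v := by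
  simp only [map_add, map_zsmul, LinearMap.add_apply, LinearMap.smul_apply, smul_eq_mul, hsymm v u]
  ring

theorem gramDet_basis_eq (hsymm : ∀ x y, B x y = B y x) (b c : Module.Basis (Fin 2) ℤ Λ) :
    gramDet B (c 0) (c 1) = gramDet B (b 0) (b 1) := by
  have h := LinearMap.det_toMatrix₂_eq B b c
  rw [Int.isUnit_sq (b.isUnit_det c), one_mul] at h
  simpa [gramDet, Matrix.det_fin_two, LinearMap.toMatrix₂_apply, hsymm (c 1), hsymm (b 1), sq]
    using h

theorem exists_apply_self_neg (hsymm : ∀ x y, B x y = B y x) {u v : Λ}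
    (hdisc : gramDet B u v < 0) : ∃ w, B w w < 0 := by
  rw [gramDet] at hdisc
  have hQ := apply_smul_add_smul_self B hsymm u v
  rcases lt_trichotomy (B u u) 0 with ha | ha | ha
  · exact ⟨u, ha⟩
  · refine ⟨(-(B v v ^ 2 + 1)) • u + (B u v) • v, ?_⟩
    rw [hQ, ha]
    have hm : 0 < B u v ^ 2 := by rw [ha] at hdisc; linarith
    nlinarith [mul_pos hm (show 0 < 2 * B v v ^ 2 + 2 - B v v by nlinarith)]
  · refine ⟨(-(B u v)) • u + (B u u) • v, ?_⟩
    rw [hQ]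
    nlinarith

theorem isUnit_of_eq_smul_of_forall_le {v : Λ} (hv : B v v < 0)
    (hmax : ∀ w, B w w < 0 → B w w ≤ B v v) {d : ℤ} {w : Λ} (h : v = d • w) : IsUnit d := by
  have hvw : B v v = d ^ 2 * B w w := by
    simp only [h, map_zsmul, LinearMap.smul_apply, smul_eq_mul]
    ring
  have hw : B w w < 0 := by nlinarith [sq_nonneg d]
  have hd : 0 < |d| := abs_pos.mpr fun hd => by simp [hd] at hvw; omega
  have hd1 : |d| ≤ 1 := (sq_le_one_iff_abs_le_one d).mp (by nlinarith [hmax w hw])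
  rw [Int.isUnit_iff_abs_eq]
  omega

theorem exists_nonneg_apply_add_smul_self (hsymm : ∀ x y, B x y = B y x) {u v : Λ}
    (hdisc : gramDet B u v < 0) (hv : B v v < 0) (hmax : ∀ w, B w w < 0 → B w w ≤ B v v) :
    ∃ k : ℤ, 0 ≤ B (u + k • v) (u + k • v) := by
  rw [gramDet] at hdisc
  obtain ⟨k, hk⟩ := Int.exists_abs_two_mul_add_mul_le (B u v) hv.ne
  have hk' := sq_le_sq.mpr hk
  have hQ := apply_smul_add_smul_self B hsymm u v 1 k
  rw [one_smul] at hQ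
  refine ⟨k, not_lt.mp fun hneg => ?_⟩
  have hle := hmax _ hneg
  rw [hQ] at hneg hle
  nlinarith [mul_le_mul_of_nonpos_left hle hv.le]

end

theorem stmt_4 (Λ : Type*) [AddCommGroup Λ] [Module ℤ Λ]
    (B : Λ →ₗ[ℤ] Λ →ₗ[ℤ] ℤ)
    (hsymm : ∀ x y, B x y = B y x)
    (bas : Module.Basis (Fin 2) ℤ Λ)
    (hsig : B (bas 0) (bas 0) * B (bas 1) (bas 1) - (B (bas 0) (bas 1)) ^ 2 < 0) :
    ∃ g : Module.Basis (Fin 2) ℤ Λ,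
      0 ≤ B (g 0) (g 0) ∧ 0 ≤ B (g 0) (g 1) ∧ B (g 1) (g 1) < 0 := by
  -- so that the given `ℤ`-action agrees syntactically with `zsmul`
  obtain rfl := Subsingleton.elim ‹Module ℤ Λ› (AddCommGroup.toIntModule Λ)
  obtain ⟨v, hv, hmax⟩ :=
    Int.exists_max_of_exists_neg (fun w => B w w) (exists_apply_self_neg B hsymm hsig)
  obtain ⟨g, rfl⟩ := bas.exists_snd_eq fun d w => isUnit_of_eq_smul_of_forall_le B hv hmax
  obtain ⟨k, hk⟩ := exists_nonneg_apply_add_smul_self B hsymm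
    ((gramDet_basis_eq B hsymm bas g).trans_lt hsig) hv hmax
  obtain ⟨σ, hσ, hσk⟩ : ∃ σ : ℤ, IsUnit σ ∧ 0 ≤ σ * B (g 0 + k • g 1) (g 1) :=
    (le_total 0 (B (g 0 + k • g 1) (g 1))).elim (fun h => ⟨1, isUnit_one, by linarith⟩)
      fun h => ⟨-1, isUnit_one.neg, by linarith⟩
  obtain ⟨g', hg'0, hg'1⟩ := g.exists_fin_two_of_isUnit (p := 1) (q := 0) (r := k) (s := σ)
    (by simpa using hσ)
  refine ⟨g', ?_, ?_, ?_⟩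
  · simpa [hg'0] using hk
  · simpa [hg'0, hg'1, mul_comm σ] using hσk
  · simpa [hg'1, ← mul_assoc, ← sq, Int.isUnit_sq hσ] using hv
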